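/- For every finite word w = (w₀,…,w_{n−1}) ∈ (Fin 4)^n, the cylinder piece Q_w := π({x ∈ (Fin 4)^ℕ : x k = w k for all k < n}) equals S_{w₀}∘S_{w₁}∘⋯∘S_{w_{n−1}}(K_α), is contained in the closed axis-parallel square of center c_w = ∑_{k<n} α^k • v(w k) and sidelength α^n, and has diameter at most √2·α^n; moreover, for two distinct words w ≠ w' of the same length n, the distance between Q_w and Q_{w'} is at least (1−2α)·α^{n−1}. -/

import Mathlib

/-- The four corner vectors `(±(1-α)/2, ±(1-α)/2)` of the 4-corner Cantor construction. -/
noncomputable def cornerV (α : ℝ) : Fin 4 → EuclideanSpace ℝ (Fin 2) := fun i =>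
  (WithLp.equiv 2 (Fin 2 → ℝ)).symm
    ![if (i : ℕ) % 2 = 0 then (1 - α) / 2 else -((1 - α) / 2),
      if (i : ℕ) < 2 then (1 - α) / 2 else -((1 - α) / 2)]

/-- The coding map `π(x) = ∑ αⁿ • v (x n)` of the 4-corner Cantor set. -/
noncomputable def cantorPi (α : ℝ) (x : ℕ → Fin 4) : EuclideanSpace ℝ (Fin 2) :=
  ∑' n : ℕ, α ^ n • cornerV α (x n)

/-- The contracting similarity `S_i(z) = v i + α • z`. -/
noncomputable def simS (α : ℝ) (i : Fin 4) (z : EuclideanSpace ℝ (Fin 2)) :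
    EuclideanSpace ℝ (Fin 2) :=
  cornerV α i + α • z

/-- The composition `S_{w₀} ∘ S_{w₁} ∘ ⋯ ∘ S_{w_{n-1}}` associated to a finite word `w`. -/
noncomputable def wordMap (α : ℝ) : {n : ℕ} → (Fin n → Fin 4) →
    EuclideanSpace ℝ (Fin 2) → EuclideanSpace ℝ (Fin 2)
  | 0, _ => id
  | (_ + 1), w => simS α (w 0) ∘ wordMap α (fun k => w k.succ)

/-- The cylinder piece `Q_w = π({x : x k = w k for all k < n})`. -/
noncomputable def cylPiece (α : ℝ) {n : ℕ} (w : Fin n → Fin 4) :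
    Set (EuclideanSpace ℝ (Fin 2)) :=
  cantorPi α '' {x : ℕ → Fin 4 | ∀ k : Fin n, x k = w k}

/-- The center `c_w = ∑_{k<n} α^k • v (w k)` of the cylinder piece `Q_w`. -/
noncomputable def cylCenter (α : ℝ) {n : ℕ} (w : Fin n → Fin 4) :
    EuclideanSpace ℝ (Fin 2) :=
  ∑ k : Fin n, α ^ (k : ℕ) • cornerV α (w k)

/-! Splitting the coding series after `n` terms gives `π x = c_w + αⁿ • π (x (· + n))` for every
`x` in the cylinder of `w`, so `Q_w = c_w + αⁿ • K_α`, and `c_w + αⁿ • z` is exactly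
`S_{w₀} ∘ ⋯ ∘ S_{w_{n-1}}`. Every coordinate of a corner is `±(1-α)/2`, so `K_α ⊆ [-1/2, 1/2]²`,
which gives the square and the diameter bound. Two words first differ at some `m < n`; there the
two corners differ by `1 - α` in some coordinate, while the tails move that coordinate by at most
`α`, so the pieces are at least `αᵐ (1 - 2α)` apart. -/

open Finset

lemma summable_pow_smul_of_norm_le {E : Type*} [NormedAddCommGroup E] [NormedSpace ℝ E]
    [CompleteSpace E] {r C : ℝ} (hr₀ : 0 ≤ r) (hr₁ : r < 1) {f : ℕ → E} (hf : ∀ k, ‖f k‖ ≤ C) :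
    Summable fun k => r ^ k • f k :=
  .of_norm_bounded ((summable_geometric_of_lt_one hr₀ hr₁).mul_right C) fun k => by
    rw [norm_smul, norm_pow, Real.norm_of_nonneg hr₀]
    exact mul_le_mul_of_nonneg_left (hf k) (pow_nonneg hr₀ k)

lemma EuclideanSpace.dist_le_sqrt_card_mul {ι : Type*} [Fintype ι] {p q : EuclideanSpace ℝ ι}
    {s : ℝ} (hs : 0 ≤ s) (h : ∀ i, |p i - q i| ≤ s) :
    dist p q ≤ √(Fintype.card ι) * s := by
  rw [EuclideanSpace.dist_eq, ← Real.sqrt_sq hs, ← Real.sqrt_mul (Nat.cast_nonneg _)]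
  refine Real.sqrt_le_sqrt ?_
  calc ∑ i, dist (p i) (q i) ^ 2 ≤ ∑ _i : ι, s ^ 2 :=
        sum_le_sum fun i _ => pow_le_pow_left₀ dist_nonneg ((Real.dist_eq _ _).trans_le (h i)) 2
    _ = Fintype.card ι * s ^ 2 := by simp

section CornerCantor

variable {α : ℝ}

lemma abs_cornerV_apply (hα : α ≤ 1) (a : Fin 4) (i : Fin 2) :
    |cornerV α a i| = (1 - α) / 2 := by
  fin_cases a <;> fin_cases i <;>
    simp [cornerV, abs_of_nonneg (by linarith : (0 : ℝ) ≤ (1 - α) / 2)]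

lemma exists_cornerV_apply_eq_neg {a b : Fin 4} (hab : a ≠ b) :
    ∃ i : Fin 2, cornerV α a i = -cornerV α b i := by
  fin_cases a <;> fin_cases b <;> simp [cornerV, Fin.exists_fin_two] at hab ⊢

lemma summable_cantorSeries (hα₀ : 0 ≤ α) (hα₁ : α < 1) (x : ℕ → Fin 4) :
    Summable fun k => α ^ k • cornerV α (x k) :=
  summable_pow_smul_of_norm_le hα₀ hα₁ (C := ∑ a, ‖cornerV α a‖) fun _ =>
    single_le_sum (f := fun a => ‖cornerV α a‖) (fun _ _ => norm_nonneg _) (mem_univ _)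

lemma cantorPi_eq_sum_add_smul (hα₀ : 0 ≤ α) (hα₁ : α < 1) (x : ℕ → Fin 4) (m : ℕ) :
    cantorPi α x = ∑ k ∈ range m, α ^ k • cornerV α (x k) +
      α ^ m • cantorPi α fun k => x (k + m) := by
  rw [cantorPi, ← (summable_cantorSeries hα₀ hα₁ x).sum_add_tsum_nat_add m, cantorPi,
    ← (summable_cantorSeries hα₀ hα₁ _).tsum_const_smul]
  simp only [smul_smul, ← pow_add, add_comm m]

lemma cantorPi_eq_simS (hα₀ : 0 ≤ α) (hα₁ : α < 1) (x : ℕ → Fin 4) :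
    cantorPi α x = simS α (x 0) (cantorPi α fun k => x (k + 1)) := by
  simpa [simS] using cantorPi_eq_sum_add_smul hα₀ hα₁ x 1

lemma abs_cantorPi_apply_le (hα₀ : 0 ≤ α) (hα₁ : α < 1) (x : ℕ → Fin 4) (i : Fin 2) :
    |cantorPi α x i| ≤ 1 / 2 := by
  have hsum : HasSum (fun k => (1 - α) / 2 * α ^ k) ((1 - α) / 2 * (1 - α)⁻¹) :=
    (hasSum_geometric_of_lt_one hα₀ hα₁).mul_left _
  have hcoord : cantorPi α x i = ∑' k, α ^ k * cornerV α (x k) i := by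
    simpa [cantorPi] using
      (EuclideanSpace.proj (𝕜 := ℝ) i).map_tsum (summable_cantorSeries hα₀ hα₁ x)
  calc |cantorPi α x i| ≤ (1 - α) / 2 * (1 - α)⁻¹ := by
        rw [hcoord, ← Real.norm_eq_abs]
        refine tsum_of_norm_bounded hsum fun k => ?_
        rw [Real.norm_eq_abs, abs_mul, abs_cornerV_apply hα₁.le, abs_of_nonneg (pow_nonneg hα₀ k),
          mul_comm]
    _ = 1 / 2 := by field_simp [(sub_pos.2 hα₁).ne']

lemma cylCenter_succ {n : ℕ} (w : Fin (n + 1) → Fin 4) :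
    cylCenter α w = cornerV α (w 0) + α • cylCenter α (fun k => w k.succ) := by
  simp [cylCenter, Fin.sum_univ_succ, smul_sum, smul_smul, pow_succ']

lemma wordMap_eq {n : ℕ} (w : Fin n → Fin 4) :
    wordMap α w = fun z => cylCenter α w + α ^ n • z := by
  induction n with
  | zero => funext z; simp [wordMap, cylCenter]
  | succ n ih =>
    funext z
    rw [wordMap, Function.comp_apply, ih, cylCenter_succ, simS, smul_add, smul_smul, ← pow_succ',
      add_assoc]

lemma cylCenter_eq_sum_range {n : ℕ} {w : Fin n → Fin 4} {x : ℕ → Fin 4}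
    (hx : ∀ k : Fin n, x k = w k) :
    cylCenter α w = ∑ k ∈ range n, α ^ k • cornerV α (x k) := by
  rw [← Fin.sum_univ_eq_sum_range (fun k => α ^ k • cornerV α (x k))]
  simp only [cylCenter, hx]

lemma cylPiece_eq_image_wordMap (hα₀ : 0 ≤ α) (hα₁ : α < 1) {n : ℕ} (w : Fin n → Fin 4) :
    cylPiece α w = wordMap α w '' Set.range (cantorPi α) := by
  rw [wordMap_eq]
  ext p
  constructor
  · rintro ⟨x, hx, rfl⟩
    exact ⟨_, ⟨fun k => x (k + n), rfl⟩,
      by rw [cantorPi_eq_sum_add_smul hα₀ hα₁ x n, cylCenter_eq_sum_range hx]⟩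
  · rintro ⟨_, ⟨y, rfl⟩, rfl⟩
    let x : ℕ → Fin 4 := fun k => if h : k < n then w ⟨k, h⟩ else y (k - n)
    have hx : ∀ k : Fin n, x k = w k := fun k => dif_pos k.2
    refine ⟨x, hx, ?_⟩
    rw [cantorPi_eq_sum_add_smul hα₀ hα₁ x n, cylCenter_eq_sum_range hx]
    congr 3
    ext k
    simp [x]

lemma cylPiece_subset_square (hα₀ : 0 ≤ α) (hα₁ : α < 1) {n : ℕ} (w : Fin n → Fin 4) :
    cylPiece α w ⊆
      {p : EuclideanSpace ℝ (Fin 2) | ∀ i : Fin 2, |p i - cylCenter α w i| ≤ α ^ n / 2} := by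
  rw [cylPiece_eq_image_wordMap hα₀ hα₁, wordMap_eq]
  rintro _ ⟨_, ⟨x, rfl⟩, rfl⟩ i
  have hx := abs_cantorPi_apply_le hα₀ hα₁ x i
  simp only [PiLp.add_apply, PiLp.smul_apply, smul_eq_mul, add_sub_cancel_left, abs_mul,
    abs_of_nonneg (pow_nonneg hα₀ n)]
  linarith [mul_le_mul_of_nonneg_left hx (pow_nonneg hα₀ n)]

lemma diam_cylPiece_le (hα₀ : 0 ≤ α) (hα₁ : α < 1) {n : ℕ} (w : Fin n → Fin 4) :
    Metric.diam (cylPiece α w) ≤ √2 * α ^ n := by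
  refine Metric.diam_le_of_forall_dist_le (by positivity) fun p hp q hq => ?_
  have hside : ∀ i, |p i - q i| ≤ α ^ n := fun i => by
    have hp := cylPiece_subset_square hα₀ hα₁ w hp i
    have hq := cylPiece_subset_square hα₀ hα₁ w hq i
    rw [abs_sub_comm] at hq
    linarith [abs_sub_le (p i) (cylCenter α w i) (q i)]
  simpa using EuclideanSpace.dist_le_sqrt_card_mul (pow_nonneg hα₀ n) hside

lemma one_sub_two_mul_le_dist_simS (hα₀ : 0 ≤ α) (hα₁ : α ≤ 1) {a b : Fin 4} (hab : a ≠ b)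
    {z z' : EuclideanSpace ℝ (Fin 2)} (hz : ∀ i, |z i| ≤ 1 / 2) (hz' : ∀ i, |z' i| ≤ 1 / 2) :
    1 - 2 * α ≤ dist (simS α a z) (simS α b z') := by
  obtain ⟨i, hi⟩ := exists_cornerV_apply_eq_neg (α := α) hab
  refine le_trans ?_ (PiLp.dist_apply_le _ _ i)
  have hdiff : |z i - z' i| ≤ 1 := (abs_sub _ _).trans (by linarith [hz i, hz' i])
  calc 1 - 2 * α = |2 * cornerV α b i| - α * 1 := by
        rw [abs_mul, abs_two, abs_cornerV_apply hα₁]; ring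
    _ ≤ |2 * cornerV α b i| - |α * (z i - z' i)| := by
        rw [abs_mul α, abs_of_nonneg hα₀]; gcongr
    _ ≤ |2 * cornerV α b i - α * (z i - z' i)| := abs_sub_abs_le_abs_sub _ _
    _ = dist (simS α a z i) (simS α b z' i) := by
        rw [Real.dist_eq, ← abs_neg]
        congr 1
        simp only [simS, PiLp.add_apply, PiLp.smul_apply, smul_eq_mul, hi]
        ring

lemma mul_pow_le_dist_cantorPi (hα₀ : 0 ≤ α) (hα₁ : α < 1) {x y : ℕ → Fin 4} {m : ℕ}
    (hxy : ∀ k < m, x k = y k) (hm : x m ≠ y m) :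
    (1 - 2 * α) * α ^ m ≤ dist (cantorPi α x) (cantorPi α y) := by
  have hsum : ∑ k ∈ range m, α ^ k • cornerV α (x k) = ∑ k ∈ range m, α ^ k • cornerV α (y k) :=
    sum_congr rfl fun k hk => by rw [hxy k (mem_range.1 hk)]
  rw [cantorPi_eq_sum_add_smul hα₀ hα₁ x m, cantorPi_eq_sum_add_smul hα₀ hα₁ y m, hsum,
    dist_add_left, dist_smul₀, cantorPi_eq_simS hα₀ hα₁,
    cantorPi_eq_simS hα₀ hα₁ (fun k => y (k + m)), Real.norm_of_nonneg (pow_nonneg hα₀ m), mul_comm]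
  exact mul_le_mul_of_nonneg_left (one_sub_two_mul_le_dist_simS hα₀ hα₁.le (by simpa using hm)
    (abs_cantorPi_apply_le hα₀ hα₁ _) (abs_cantorPi_apply_le hα₀ hα₁ _)) (pow_nonneg hα₀ m)

lemma mul_pow_pred_le_dist_of_mem_cylPiece (hα₀ : 0 ≤ α) (hα : α ≤ 1 / 2) {n : ℕ}
    {w w' : Fin n → Fin 4} (hne : w ≠ w') {p q : EuclideanSpace ℝ (Fin 2)}
    (hp : p ∈ cylPiece α w) (hq : q ∈ cylPiece α w') :
    (1 - 2 * α) * α ^ (n - 1) ≤ dist p q := by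
  classical
  obtain ⟨x, hx, rfl⟩ := hp
  obtain ⟨y, hy, rfl⟩ := hq
  obtain ⟨k, hk⟩ := Function.ne_iff.1 hne
  have hex : ∃ j, x j ≠ y j := ⟨k, by rwa [hx, hy]⟩
  have hfirst : Nat.find hex ≤ n - 1 := (Nat.find_min' hex (by rwa [hx, hy])).trans (by omega)
  calc (1 - 2 * α) * α ^ (n - 1) ≤ (1 - 2 * α) * α ^ Nat.find hex :=
        mul_le_mul_of_nonneg_left (pow_le_pow_of_le_one hα₀ (by linarith) hfirst) (by linarith)
    _ ≤ dist (cantorPi α x) (cantorPi α y) :=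
        mul_pow_le_dist_cantorPi hα₀ (by linarith)
          (fun j hj => not_not.1 (Nat.find_min hex hj)) (Nat.find_spec hex)

end CornerCantor

theorem stmt4 (α : ℝ) (hα : α ∈ Set.Ioo (0 : ℝ) (1 / 2)) (n : ℕ) (w : Fin n → Fin 4) :
    cylPiece α w = wordMap α w '' Set.range (cantorPi α) ∧
    cylPiece α w ⊆
      {p : EuclideanSpace ℝ (Fin 2) | ∀ i : Fin 2, |p i - cylCenter α w i| ≤ α ^ n / 2} ∧
    Metric.diam (cylPiece α w) ≤ Real.sqrt 2 * α ^ n ∧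
    ∀ w' : Fin n → Fin 4, w ≠ w' →
      ∀ p ∈ cylPiece α w, ∀ q ∈ cylPiece α w',
        (1 - 2 * α) * α ^ (n - 1) ≤ dist p q := by
  obtain ⟨hα₀, hα₁⟩ := hα
  have hα₁' : α < 1 := by linarith
  exact ⟨cylPiece_eq_image_wordMap hα₀.le hα₁' w, cylPiece_subset_square hα₀.le hα₁' w,
    diam_cylPiece_le hα₀.le hα₁' w, fun _ hne _ hp _ hq =>
      mul_pow_pred_le_dist_of_mem_cylPiece hα₀.le hα₁.le hne hp hq⟩
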